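/- In the Laurent polynomial ring Q(v)[T, T^{-1}], for nonnegative integers k ≤ n, the identity v^{k(n+1-k)} [T; 2k-n-1]_{(k)} = ∑_{j=0}^{k} (-1)^j v^{j(n-2k+1)} T^{-j} [k choose j] [n-k+j]_{(j)} [T; k]_{(k-j)} holds, where [T; r] = (v^r T - v^{-r} T^{-1})/(v - v^{-1}), [T; r]_{(j)} = [T;r][T;r-1]⋯[T;r-j+1], and [m]_{(j)} = [m][m-1]⋯[m-j+1]. -/

import Mathlib

noncomputable section

open Finset

/-- The field `ℚ(v)` of rational functions, with `v` an indeterminate. -/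
abbrev Fv : Type := RatFunc ℚ

/-- The indeterminate `v`. -/
def vv : Fv := RatFunc.X

/-- Quantum integer `[m] = (v^m - v^{-m})/(v - v^{-1})`. -/
def qint (m : ℤ) : Fv := (vv ^ m - vv ^ (-m)) / (vv - vv⁻¹)

/-- Quantum factorial `[n]! = [n][n-1]⋯[1]`, with `[0]! = 1`. -/
def qfact (n : ℕ) : Fv := ∏ i ∈ Finset.range n, qint (i + 1)

/-- Falling quantum factorial `[m]_{(j)} = [m][m-1]⋯[m-j+1]`, defined for any integer `m`. -/
def qfall (m : ℤ) (j : ℕ) : Fv := ∏ i ∈ Finset.range j, qint (m - i)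

/-- Quantum binomial coefficient `[m choose j] = [m]_{(j)}/[j]!`, for any integer `m`. -/
def qbinom (m : ℤ) (j : ℕ) : Fv := qfall m j / qfact j


/-- The Laurent polynomial ring `ℚ(v)[T, T⁻¹]`. -/
abbrev LPT : Type := LaurentPolynomial Fv

/-- `[T; r] = (v^r T - v^{-r} T^{-1})/(v - v^{-1})` in `ℚ(v)[T, T⁻¹]`. -/
def bT (r : ℤ) : LPT :=
  LaurentPolynomial.C (vv ^ r / (vv - vv⁻¹)) * LaurentPolynomial.T 1 -
    LaurentPolynomial.C (vv ^ (-r) / (vv - vv⁻¹)) * LaurentPolynomial.T (-1)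

/-- Falling product `[T; r]_{(j)} = [T;r][T;r-1]⋯[T;r-j+1]`, with `[T;r]_{(0)} = 1`. -/
def bTfall (r : ℤ) (j : ℕ) : LPT := ∏ i ∈ Finset.range j, bT (r - i)

/-! ### Auxiliary scalar lemmas -/

lemma vv_ne_zero : vv ≠ 0 := RatFunc.X_ne_zero

lemma X_pow_ne_one (d : ℕ) (hd : d ≠ 0) : (RatFunc.X : Fv) ^ d ≠ 1 := by
  intro h
  have h2 : (algebraMap (Polynomial ℚ) Fv) (Polynomial.X ^ d) = algebraMap _ _ 1 := by
    simpa [map_pow, RatFunc.algebraMap_X] using h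
  have h3 := RatFunc.algebraMap_injective ℚ h2
  have := congrArg Polynomial.natDegree h3
  simp [Polynomial.natDegree_X_pow] at this
  exact hd this

lemma denom_ne : vv - vv⁻¹ ≠ 0 := by
  intro h
  have hv := vv_ne_zero
  have : vv * vv = 1 := by
    field_simp at h
    linear_combination h
  exact X_pow_ne_one 2 (by norm_num) (by rw [pow_two]; exact this)

lemma qint_zero : qint 0 = 0 := by simp [qint]

lemma qint_neg (a : ℤ) : qint (-a) = - qint a := by
  simp [qint, neg_div]; ring_nf

lemma qint_pos_ne_zero (n : ℕ) : qint ((n : ℤ) + 1) ≠ 0 := by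
  have hv := vv_ne_zero
  have hnum : vv ^ ((n : ℤ) + 1) - vv ^ (-((n : ℤ) + 1)) ≠ 0 := by
    rw [sub_ne_zero]
    intro h
    have h2 : vv ^ ((n : ℤ) + 1) * vv ^ ((n : ℤ) + 1) = 1 := by
      nth_rewrite 2 [h]
      rw [← zpow_add₀ hv, show ((n:ℤ) + 1) + -((n:ℤ)+1) = 0 by ring, zpow_zero]
    have h3 : vv ^ (((n + 1) + (n + 1) : ℕ)) = 1 := by
      rw [← h2, ← zpow_natCast vv, ← zpow_add₀ hv]; push_cast; ring_nf
    exact X_pow_ne_one _ (by omega) h3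
  exact div_ne_zero hnum denom_ne

lemma qfact_ne_zero (n : ℕ) : qfact n ≠ 0 := by
  rw [qfact]
  exact Finset.prod_ne_zero_iff.2 fun i _ => qint_pos_ne_zero i

lemma qint_add (a b : ℤ) : qint (a + b) = vv ^ (-b) * qint a + vv ^ a * qint b := by
  have hv := vv_ne_zero
  rw [qint, qint, qint, ← mul_div_assoc, ← mul_div_assoc, ← add_div]
  congr 1
  rw [neg_add, zpow_add₀ hv, zpow_add₀ hv, zpow_neg, zpow_neg]
  field_simp
  ring

lemma qfall_zero (a : ℤ) : qfall a 0 = 1 := by simp [qfall]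

lemma qfall_succ (a : ℤ) (j : ℕ) : qfall a (j + 1) = qfall a j * qint (a - j) := by
  rw [qfall, qfall, Finset.prod_range_succ]

lemma qfall_succ' (a : ℤ) (j : ℕ) : qfall a (j + 1) = qint a * qfall (a - 1) j := by
  rw [qfall, qfall, Finset.prod_range_succ', mul_comm]
  congr 1
  · simp
  · apply Finset.prod_congr rfl
    intro i _
    congr 1
    push_cast
    ring

lemma qfall_nat_lt (m j : ℕ) (h : m < j) : qfall (m : ℤ) j = 0 := by
  rw [qfall]
  apply Finset.prod_eq_zero (Finset.mem_range.2 h)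
  simp [qint_zero]

lemma qfact_succ (n : ℕ) : qfact (n + 1) = qfact n * qint ((n : ℤ) + 1) := by
  rw [qfact, qfact, Finset.prod_range_succ]

lemma qbinom_zero (m : ℤ) : qbinom m 0 = 1 := by
  simp [qbinom, qfall_zero, qfact]

/-- The `q`-Pascal identity. -/
lemma qbinom_pascal (m j : ℕ) :
    qbinom ((m : ℤ) + 1) (j + 1) =
      vv ^ (-(j : ℤ) - 1) * qbinom (m : ℤ) (j + 1) + vv ^ ((m : ℤ) - j) * qbinom (m : ℤ) j := by
  have key : qint ((m : ℤ) + 1) =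
      vv ^ (-(j:ℤ)-1) * qint ((m:ℤ) - j) + vv ^ ((m:ℤ)-j) * qint ((j:ℤ)+1) := by
    rw [show ((m : ℤ) + 1) = ((m:ℤ) - j) + ((j:ℤ) + 1) by ring, qint_add]
    rw [show (-((j:ℤ)+1)) = -(j:ℤ)-1 by ring]
  rw [qbinom, qbinom, qbinom,
    show ((m:ℤ) + 1) = (((m+1 : ℕ) : ℤ)) by push_cast; ring,
    qfall_succ', qfall_succ, qfact_succ,
    show (((m+1:ℕ):ℤ) - 1) = (m : ℤ) by push_cast; ring]
  have hf := qfact_ne_zero j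
  have hq := qint_pos_ne_zero j
  field_simp
  rw [Nat.cast_add, Nat.cast_one, key]
  ring

/-! ### Coefficients for the shift expansion -/

/-- Coefficients expressing `[T; r-s]_{(m)}` in terms of `T^{-j} [T;r]_{(m-j)}`. -/
def ecoef (s r : ℤ) (m j : ℕ) : Fv :=
  (-1) ^ j * (vv ^ (s - r)) ^ j * ((vv ^ s) ^ m)⁻¹ * qbinom (m : ℤ) j * qfall (s - 1 + j) j

lemma ecoef_zero (s r : ℤ) (m : ℕ) : ecoef s r (m + 1) 0 = vv ^ (-s) * ecoef s r m 0 := by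
  simp only [ecoef, qbinom_zero, qfall_zero, pow_zero, pow_succ, mul_inv, zpow_neg]
  ring

lemma ecoef_succ (s r : ℤ) (m j : ℕ) :
    ecoef s r (m + 1) (j + 1) =
      vv ^ (-(s + (j : ℤ) + 1)) * ecoef s r m (j + 1) -
        vv ^ (-(r - (m : ℤ) + (j : ℤ))) * qint (s + (j : ℤ)) * ecoef s r m j := by
  have hv := vv_ne_zero
  have hY : vv ^ s ≠ 0 := zpow_ne_zero _ hv
  have hX : vv ^ (s - r) ≠ 0 := zpow_ne_zero _ hv
  rw [ecoef, ecoef, ecoef,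
    show (((m + 1 : ℕ)) : ℤ) = (m : ℤ) + 1 by push_cast; ring, qbinom_pascal,
    show s - 1 + (((j + 1 : ℕ)) : ℤ) = s + (j : ℤ) by push_cast; ring]
  have hq : qfall (s + (j : ℤ)) (j + 1) = qint (s + (j : ℤ)) * qfall (s - 1 + j) j := by
    rw [qfall_succ', show s + (j : ℤ) - 1 = s - 1 + j by ring]
  rw [hq]
  have e1 : vv ^ (-(s + (j : ℤ) + 1)) = (vv ^ s)⁻¹ * (vv ^ (j + 1))⁻¹ := by
    rw [← zpow_natCast vv (j + 1), ← zpow_neg, ← zpow_neg, ← zpow_add₀ hv]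
    congr 1
    push_cast
    ring
  have e2 : vv ^ (-(r - (m : ℤ) + (j : ℤ))) =
      vv ^ (s - r) * (vv ^ s)⁻¹ * (vv ^ m * (vv ^ j)⁻¹) := by
    rw [← zpow_natCast vv m, ← zpow_natCast vv j, ← zpow_neg, ← zpow_neg,
      ← zpow_add₀ hv, ← zpow_add₀ hv, ← zpow_add₀ hv]
    congr 1
    push_cast
    ring
  have e3 : vv ^ (-(j : ℤ) - 1) = (vv ^ (j + 1))⁻¹ := by
    rw [← zpow_natCast vv (j + 1), ← zpow_neg]
    congr 1
    push_cast
    ring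
  have e4 : vv ^ ((m : ℤ) - j) = vv ^ m * (vv ^ j)⁻¹ := by
    rw [← zpow_natCast vv m, ← zpow_natCast vv j, ← zpow_neg, ← zpow_add₀ hv]
    congr 1
  rw [e1, e2, e3, e4]
  ring

/-! ### Lemmas in the Laurent polynomial ring -/

open LaurentPolynomial in
lemma bT_rel (a b : ℤ) :
    bT b = C (vv ^ (b - a)) * bT a + C (vv ^ (-a) * qint (b - a)) * T (-1) := by
  have hv := vv_ne_zero
  rw [bT, bT, mul_sub, ← mul_assoc, ← mul_assoc, ← map_mul, ← map_mul]
  have h1 : vv ^ (b - a) * (vv ^ a / (vv - vv⁻¹)) = vv ^ b / (vv - vv⁻¹) := by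
    rw [← mul_div_assoc, ← zpow_add₀ hv, show b - a + a = b by ring]
  have h2 : vv ^ (-a) * qint (b - a) - vv ^ (b - a) * (vv ^ (-a) / (vv - vv⁻¹)) =
      - (vv ^ (-b) / (vv - vv⁻¹)) := by
    rw [qint, ← mul_div_assoc, ← mul_div_assoc, ← sub_div, mul_sub,
      ← zpow_add₀ hv, ← zpow_add₀ hv, ← zpow_add₀ hv,
      show -a + (b - a) = b - a + -a by ring, show -a + -(b-a) = -b by ring]
    rw [← neg_div]
    congr 1
    ring
  rw [h1]
  have hC : C (vv ^ (-a) * qint (b - a)) - C (vv ^ (b - a) * (vv ^ (-a) / (vv - vv⁻¹))) =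
      - C (vv ^ (-b) / (vv - vv⁻¹)) := by
    rw [← map_sub, ← map_neg]
    exact congrArg C h2
  linear_combination (-(LaurentPolynomial.T (-1) : LPT)) * hC

lemma bTfall_zero (r : ℤ) : bTfall r 0 = 1 := by simp [bTfall]

lemma bTfall_succ (r : ℤ) (j : ℕ) : bTfall r (j + 1) = bTfall r j * bT (r - j) := by
  rw [bTfall, bTfall, Finset.prod_range_succ]

open LaurentPolynomial in
/-- Auxiliary family used to reindex a sum in the proof of `grand`. -/
def glR (s r : ℤ) (m : ℕ) : ℕ → LPT
  | 0 => 0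
  | (j + 1) => C (vv ^ (-(r - (m : ℤ) + (j : ℤ))) * qint (s + (j : ℤ)) * ecoef s r m j) *
      T (-((j : ℤ) + 1)) * bTfall r (m - j)

open LaurentPolynomial in
/-- The key expansion: `[T; r-s]_{(m)}` in the "basis" `T^{-j} [T; r]_{(m-j)}`. -/
lemma grand (s r : ℤ) (m : ℕ) :
    bTfall (r - s) m =
      ∑ j ∈ range (m + 1), C (ecoef s r m j) * T (-(j : ℤ)) * bTfall r (m - j) := by
  induction m with
  | zero =>
    simp [bTfall_zero, ecoef, qbinom_zero, qfall_zero]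
  | succ m ih =>
    have hv := vv_ne_zero
    have h0 : ecoef s r m (m + 1) = 0 := by
      rw [ecoef, qbinom, qfall_nat_lt m (m + 1) (Nat.lt_succ_self m)]
      simp
    rw [bTfall_succ, ih, Finset.sum_mul]
    have hstep : ∀ j ∈ range (m + 1),
        C (ecoef s r m j) * T (-(j : ℤ)) * bTfall r (m - j) * bT (r - s - (m : ℤ)) =
          C (vv ^ (-(s + (j : ℤ))) * ecoef s r m j) * T (-(j : ℤ)) * bTfall r (m + 1 - j) -
            C (vv ^ (-(r - (m : ℤ) + (j : ℤ))) * qint (s + (j : ℤ)) * ecoef s r m j) *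
              T (-((j : ℤ) + 1)) * bTfall r (m - j) := by
      intro j hj
      have hjm : j ≤ m := Nat.lt_succ_iff.mp (Finset.mem_range.mp hj)
      have hb : bTfall r (m + 1 - j) = bTfall r (m - j) * bT (r - ((m : ℤ) - (j : ℤ))) := by
        have hc : ((m - j : ℕ) : ℤ) = (m : ℤ) - (j : ℤ) := by omega
        rw [show m + 1 - j = (m - j) + 1 by omega, bTfall_succ, hc]
      have hT : (T (-((j : ℤ) + 1)) : LPT) = T (-(j : ℤ)) * T (-1 : ℤ) := by
        rw [← LaurentPolynomial.T_add]
        congr 1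
        ring
      rw [bT_rel (r - ((m : ℤ) - (j : ℤ))) (r - s - (m : ℤ)),
        show r - s - (m : ℤ) - (r - ((m : ℤ) - (j : ℤ))) = -(s + (j : ℤ)) by ring,
        show -(r - ((m : ℤ) - (j : ℤ))) = -(r - (m : ℤ) + (j : ℤ)) by ring,
        qint_neg, hb, hT]
      simp only [map_mul, map_neg]
      ring
    rw [Finset.sum_congr rfl hstep, Finset.sum_sub_distrib]
    have hP : ∑ j ∈ range (m + 1),
          C (vv ^ (-(s + (j : ℤ))) * ecoef s r m j) * T (-(j : ℤ)) * bTfall r (m + 1 - j) =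
        ∑ j ∈ range (m + 2),
          C (vv ^ (-(s + (j : ℤ))) * ecoef s r m j) * T (-(j : ℤ)) * bTfall r (m + 1 - j) := by
      rw [Finset.sum_range_succ (n := m + 1), h0]
      simp
    have hQ : ∑ j ∈ range (m + 1),
          C (vv ^ (-(r - (m : ℤ) + (j : ℤ))) * qint (s + (j : ℤ)) * ecoef s r m j) *
            T (-((j : ℤ) + 1)) * bTfall r (m - j) =
        ∑ j ∈ range (m + 2), glR s r m j := by
      rw [Finset.sum_range_succ' (glR s r m) (m + 1)]
      simp [glR]
    rw [hP, hQ, ← Finset.sum_sub_distrib]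
    apply Finset.sum_congr rfl
    intro j hj
    match j with
    | 0 =>
      simp only [glR, sub_zero, ecoef_zero, Nat.cast_zero, add_zero, Nat.sub_zero]
    | (j + 1) =>
      rw [ecoef_succ, glR]
      rw [show (((j + 1 : ℕ)) : ℤ) = (j : ℤ) + 1 by push_cast; ring]
      rw [show -(s + ((j : ℤ) + 1)) = -(s + (j : ℤ) + 1) by ring]
      rw [show m + 1 - (j + 1) = m - j by omega]
      simp only [map_sub, map_mul]
      ring

/-- A variant of the binomial theorem: for `0 ≤ k ≤ n`,
`v^{k(n+1-k)} [T; 2k-n-1]_{(k)} = ∑_{j=0}^{k} (-1)^j v^{j(n-2k+1)} T^{-j} [k choose j]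
[n-k+j]_{(j)} [T; k]_{(k-j)}` in `ℚ(v)[T, T⁻¹]`. -/
theorem third_binomial (n k : ℕ) (hk : k ≤ n) :
    LaurentPolynomial.C (vv ^ ((k : ℤ) * ((n : ℤ) + 1 - k))) * bTfall (2 * (k : ℤ) - n - 1) k =
      ∑ j ∈ Finset.range (k + 1),
        LaurentPolynomial.C ((-1) ^ j * vv ^ ((j : ℤ) * ((n : ℤ) - 2 * k + 1)) *
            qbinom (k : ℤ) j * qfall ((n : ℤ) - k + j) j) *
          LaurentPolynomial.T (-(j : ℤ)) * bTfall (k : ℤ) (k - j) := by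
  have hv := vv_ne_zero
  rw [show 2 * (k : ℤ) - n - 1 = (k : ℤ) - ((n : ℤ) + 1 - (k : ℤ)) by ring,
    grand ((n : ℤ) + 1 - (k : ℤ)) (k : ℤ) k, Finset.mul_sum]
  apply Finset.sum_congr rfl
  intro j hj
  rw [← mul_assoc, ← mul_assoc, ← map_mul]
  congr 3
  rw [ecoef, show (n : ℤ) + 1 - (k : ℤ) - 1 + (j : ℤ) = (n : ℤ) - k + j by ring]
  have h1 : ((vv ^ ((n : ℤ) + 1 - (k : ℤ))) ^ k)⁻¹ =
      vv ^ (-(((n : ℤ) + 1 - (k : ℤ)) * (k : ℤ))) := by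
    rw [← zpow_natCast (vv ^ ((n : ℤ) + 1 - (k : ℤ))) k, ← zpow_mul, ← zpow_neg]
  have h2 : (vv ^ ((n : ℤ) + 1 - (k : ℤ) - (k : ℤ))) ^ j =
      vv ^ (((n : ℤ) + 1 - (k : ℤ) - (k : ℤ)) * (j : ℤ)) := by
    rw [← zpow_natCast (vv ^ ((n : ℤ) + 1 - (k : ℤ) - (k : ℤ))) j, ← zpow_mul]
  rw [h1, h2]
  have hmerge : vv ^ ((k : ℤ) * ((n : ℤ) + 1 - (k : ℤ))) *
      vv ^ (((n : ℤ) + 1 - (k : ℤ) - (k : ℤ)) * (j : ℤ)) *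
      vv ^ (-(((n : ℤ) + 1 - (k : ℤ)) * (k : ℤ))) =
      vv ^ ((j : ℤ) * ((n : ℤ) - 2 * (k : ℤ) + 1)) := by
    rw [← zpow_add₀ hv, ← zpow_add₀ hv]
    congr 1
    ring
  linear_combination (((-1 : Fv)) ^ j * qbinom (k : ℤ) j * qfall ((n : ℤ) - k + j) j) * hmerge
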